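/- arXiv:2007.00534 — 3 statements merged into one kernel-verified Lean document; each statement's English description precedes it below -/
import Mathlib

section
/- Under the oracle restart rule with γ_k = r^k γ_0, the k-th inter-restart duration satisfies Δn_{k+1} ≤ (1/(r^k γ_0 μ)) log(2/r) for all k ≥ 1, and consequently the cumulative time after the first restart satisfies n_k − Δn_1 ≤ (1/(μ(1−r) γ_{k−1})) log(2/r). -/
/-!
The oracle rule gives `exp (Δn_{k+1} γ_k μ) = δ_{n_k} μ / (2σ²γ_k)`, and since `γ_k = r γ_{k-1}` the
bound `δ_{n_k} ≤ 4σ²γ_{k-1}/μ` makes this ratio at most `2/r`; taking logarithms bounds each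
duration by `log (2/r) / (γ_k μ)`. Summing these over `k` is a geometric sum in `1/r`, which is
dominated by its last term divided by `1 - r`.
-/

open Finset Real

theorem le_log_of_exp_neg_mul_eq {t δ c B : ℝ} (hδ : 0 < δ) (h : exp (-t) * δ = c)
    (hle : δ ≤ B * c) : t ≤ log B := by
  have hc : 0 < c := h ▸ by positivity
  have hB : 0 < B := pos_of_mul_pos_left (hδ.trans_le hle) hc.le
  rw [le_log_iff_exp_le hB]
  calc exp t = δ / c := by rw [← h, exp_neg]; field_simp
    _ ≤ B := (div_le_iff₀ hc).mpr hle

theorem restart_duration_le {Δ γ μ σ δ r : ℝ} (hγμ : 0 < γ * μ) (hδ : 0 < δ) (hr : 0 < r)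
    (horacle : exp (-Δ * γ * μ) * δ = 2 * σ ^ 2 * γ / μ)
    (hδle : δ * r ≤ 4 * σ ^ 2 * γ / μ) :
    Δ ≤ 1 / (γ * μ) * log (2 / r) := by
  have hlog : Δ * (γ * μ) ≤ log (2 / r) := by
    refine le_log_of_exp_neg_mul_eq (c := 2 * σ ^ 2 * γ / μ) hδ (by rw [← horacle]; ring_nf) ?_
    rw [← le_div_iff₀ hr] at hδle
    calc δ ≤ 4 * σ ^ 2 * γ / μ / r := hδle
      _ = 2 / r * (2 * σ ^ 2 * γ / μ) := by ring
  rwa [one_div_mul_eq_div, le_div_iff₀ hγμ]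

theorem sum_Icc_one_succ_eq {M : Type*} [AddCommMonoid M] (f : ℕ → M) (m : ℕ) :
    ∑ i ∈ Icc 1 (m + 1), f i = f 1 + ∑ i ∈ Icc 1 m, f (i + 1) := by
  induction m with
  | zero => simp
  | succ m ih => rw [sum_Icc_succ_top (by omega), ih, sum_Icc_succ_top (by omega), add_assoc]

theorem sum_Icc_inv_pow_le {r : ℝ} (hr0 : 0 < r) (hr1 : r < 1) (m : ℕ) :
    ∑ j ∈ Icc 1 m, (r ^ j)⁻¹ ≤ ((1 - r) * r ^ m)⁻¹ := by
  induction m with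
  | zero => simpa using hr1.le
  | succ m ih =>
    rw [sum_Icc_succ_top (by omega)]
    calc _ ≤ ((1 - r) * r ^ m)⁻¹ + (r ^ (m + 1))⁻¹ := by gcongr
      _ = ((1 - r) * r ^ (m + 1))⁻¹ := by
        have : 1 - r ≠ 0 := by linarith
        field_simp
        ring

theorem sum_Icc_le_of_le_mul_inv_pow {a : ℕ → ℝ} {C r : ℝ} (hC : 0 ≤ C) (hr0 : 0 < r)
    (hr1 : r < 1) (ha : ∀ i, 1 ≤ i → a i ≤ C * (r ^ i)⁻¹) (m : ℕ) :
    ∑ i ∈ Icc 1 m, a i ≤ C * ((1 - r) * r ^ m)⁻¹ :=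
  calc ∑ i ∈ Icc 1 m, a i ≤ ∑ i ∈ Icc 1 m, C * (r ^ i)⁻¹ :=
        sum_le_sum fun i hi => ha i (mem_Icc.mp hi).1
    _ = C * ∑ i ∈ Icc 1 m, (r ^ i)⁻¹ := (mul_sum ..).symm
    _ ≤ C * ((1 - r) * r ^ m)⁻¹ := by grw [sum_Icc_inv_pow_le hr0 hr1 m]

theorem stmt3_general (γ0 μ σ r : ℝ) (hγ0 : 0 < γ0) (hμ : 0 < μ)
    (hr : r ∈ Set.Ioo (0 : ℝ) 1)
    (γk : ℕ → ℝ) (hγk : ∀ k, γk k = r ^ k * γ0)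
    (δnk Δn nk : ℕ → ℝ)
    (hδpos : ∀ k, 0 < δnk k)
    -- oracle restart criterion
    (horacle : ∀ k, Real.exp (-(Δn (k + 1)) * γk k * μ) * δnk k = 2 * σ ^ 2 * γk k / μ)
    -- by construction, at restart `k ≥ 1` one has `δ_{n_k} ≤ 4σ²γ_{k−1}/μ`
    (hδ : ∀ k, 1 ≤ k → δnk k ≤ 4 * σ ^ 2 * γk (k - 1) / μ)
    (hnk : ∀ k, nk k = ∑ i ∈ Finset.Icc 1 k, Δn i) :
    ∀ k, 1 ≤ k →
      Δn (k + 1) ≤ 1 / (r ^ k * γ0 * μ) * Real.log (2 / r) ∧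
      nk k - Δn 1 ≤ 1 / (μ * (1 - r) * γk (k - 1)) * Real.log (2 / r) := by
  obtain ⟨hr0, hr1⟩ := hr
  have hΔ : ∀ k, 1 ≤ k → Δn (k + 1) ≤ 1 / (r ^ k * γ0 * μ) * log (2 / r) := by
    intro k hk
    obtain ⟨m, rfl⟩ := Nat.exists_eq_add_of_le' hk
    have hδle : δnk (m + 1) * r ≤ 4 * σ ^ 2 * γk (m + 1) / μ :=
      calc δnk (m + 1) * r ≤ 4 * σ ^ 2 * γk m / μ * r := by
            gcongr
            simpa using hδ (m + 1) hk
        _ = 4 * σ ^ 2 * γk (m + 1) / μ := by rw [hγk, hγk, pow_succ]; ring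
    have := restart_duration_le (by rw [hγk]; positivity) (hδpos _) hr0 (horacle _) hδle
    rwa [hγk] at this
  intro k hk
  refine ⟨hΔ k hk, ?_⟩
  obtain ⟨m, rfl⟩ := Nat.exists_eq_add_of_le' hk
  have hlog : 0 ≤ log (2 / r) := log_nonneg (by rw [le_div_iff₀ hr0]; linarith)
  rw [hnk, sum_Icc_one_succ_eq, add_sub_cancel_left, add_tsub_cancel_right, hγk]
  calc ∑ i ∈ Icc 1 m, Δn (i + 1)
      ≤ log (2 / r) / (γ0 * μ) * ((1 - r) * r ^ m)⁻¹ :=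
        sum_Icc_le_of_le_mul_inv_pow (by positivity) hr0 hr1
          (fun i hi => (hΔ i hi).trans_eq (by field_simp)) m
    _ = _ := by field_simp

/-- **Inter-restart durations of the oracle diagnostic.**
Under the oracle restart rule with `γ_k = r^k γ_0`, the durations satisfy
`Δn_{k+1} ≤ (1/(r^k γ_0 μ)) log(2/r)` for all `k ≥ 1`, and consequently
`n_k − Δn_1 ≤ (1/(μ(1−r)γ_{k−1})) log(2/r)`. -/
theorem stmt3 (γ0 μ σ r : ℝ) (hγ0 : 0 < γ0) (hμ : 0 < μ) (hσ : 0 < σ)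
    (hr : r ∈ Set.Ioo (0 : ℝ) 1)
    (γk : ℕ → ℝ) (hγk : ∀ k, γk k = r ^ k * γ0)
    (δnk Δn nk : ℕ → ℝ)
    (hδpos : ∀ k, 0 < δnk k)
    -- oracle restart criterion
    (horacle : ∀ k, Real.exp (-(Δn (k + 1)) * γk k * μ) * δnk k = 2 * σ ^ 2 * γk k / μ)
    -- by construction, at restart `k ≥ 1` one has `δ_{n_k} ≤ 4σ²γ_{k−1}/μ`
    (hδ : ∀ k, 1 ≤ k → δnk k ≤ 4 * σ ^ 2 * γk (k - 1) / μ)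
    (hnk : ∀ k, nk k = ∑ i ∈ Finset.Icc 1 k, Δn i) :
    ∀ k, 1 ≤ k →
      Δn (k + 1) ≤ 1 / (r ^ k * γ0 * μ) * Real.log (2 / r) ∧
      nk k - Δn 1 ≤ 1 / (μ * (1 - r) * γk (k - 1)) * Real.log (2 / r) :=
  stmt3_general γ0 μ σ r hγ0 hμ hr γk hγk δnk Δn nk hδpos horacle hδ hnk
end

section
/- Let f(θ) = ½ θᵀHθ with H symmetric positive definite, and consider SGD θ_{n} = (I − γH)θ_{n−1} + γξ_n with i.i.d. zero-mean noise ξ_n of covariance C, independent of θ_0, and γ ≤ 1/(2L) where L = ‖H‖. Then for any polynomial P, E[⟨η_n, P(H)η_n⟩] = η_0ᵀ P(H)(I − γH)^{2n} η_0 + γ tr( P(H) C [I − (I − γH)^{2n}] H^{-1} (2I − γH)^{-1} ), where η_n = θ_n − θ*. -/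
/-!
Unrolling the recursion gives `η_n = (I - γH)ⁿ η₀ + Σ_{k<n} γ (I - γH)ᵏ ξ_{n-k}`. The noise
vectors are independent and centred, so in `E⟨η_n, P(H) η_n⟩` every cross term has zero mean and
each remaining noise term contributes `γ² tr(P(H) C (I - γH)^{2k})`, because `P(H)` commutes with
the symmetric matrix `I - γH`. Since `I - (I - γH)² = γ H (2I - γH)`, summing the geometric
series gives `γ Σ_{k<n} (I - γH)^{2k} = (I - (I - γH)^{2n}) H⁻¹ (2I - γH)⁻¹`; the step-size
condition makes `2I - γH` invertible.
-/

open MeasureTheory ProbabilityTheory Polynomial Matrix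

namespace Matrix

section Algebra

variable {ι R : Type*} [Fintype ι] [CommSemiring R]

lemma mulVec_dotProduct_mulVec_mulVec {κ : Type*} [Fintype κ] (B : Matrix κ ι R)
    (N : Matrix κ κ R) (x y : ι → R) :
    B *ᵥ x ⬝ᵥ N *ᵥ B *ᵥ y = x ⬝ᵥ (Bᵀ * N * B) *ᵥ y := by
  simp only [dotProduct_mulVec, ← vecMul_vecMul, vecMul_transpose]

lemma add_sum_dotProduct_mulVec_add_sum {κ : Type*} (s : Finset κ) (u : ι → R)
    (x : κ → ι → R) (N : Matrix ι ι R) :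
    (u + ∑ j ∈ s, x j) ⬝ᵥ N *ᵥ (u + ∑ j ∈ s, x j) =
      u ⬝ᵥ N *ᵥ u + ∑ j ∈ s, (u ⬝ᵥ N *ᵥ x j + x j ⬝ᵥ N *ᵥ u) +
        ∑ j ∈ s, ∑ l ∈ s, x j ⬝ᵥ N *ᵥ x l := by
  simp only [mulVec_add, mulVec_sum, dotProduct_add, add_dotProduct, dotProduct_sum,
    sum_dotProduct, Finset.sum_add_distrib]
  rw [Finset.sum_comm (s := s) (t := s)]
  ring

variable [DecidableEq ι]

lemma transpose_pow_mul_mul_pow {M A : Matrix ι ι R} (hM : Mᵀ = M) (hAM : Commute A M)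
    (k : ℕ) : (M ^ k)ᵀ * A * M ^ k = A * M ^ (2 * k) := by
  rw [transpose_pow, hM, ← (hAM.pow_right k).eq, Matrix.mul_assoc, ← pow_add, two_mul]

lemma trace_transpose_smul_pow_mul_mul_smul_pow_mul {M A : Matrix ι ι R} (hM : Mᵀ = M)
    (hAM : Commute A M) (c : R) (k : ℕ) (C : Matrix ι ι R) :
    trace ((c • M ^ k)ᵀ * A * (c • M ^ k) * C) = c * (c * trace (A * C * M ^ (2 * k))) := by
  simp only [transpose_smul, smul_mul_assoc, mul_smul_comm, trace_smul, smul_eq_mul]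
  rw [transpose_pow_mul_mul_pow hM hAM, (hAM.pow_right _).eq, Matrix.mul_assoc, trace_mul_comm]

end Algebra

variable {ι : Type*} [Fintype ι] [DecidableEq ι]

lemma eq_pow_mulVec_add_sum_of_succ {R : Type*} [Semiring R] (M : Matrix ι ι R)
    {x b : ℕ → ι → R} (h : ∀ k, x (k + 1) = M *ᵥ x k + b (k + 1)) (n : ℕ) :
    x n = M ^ n *ᵥ x 0 + ∑ k ∈ Finset.range n, M ^ k *ᵥ b (n - k) := by
  induction n with
  | zero => simp
  | succ n ih =>
    rw [h, ih, mulVec_add, mulVec_mulVec, ← pow_succ', mulVec_sum, Finset.sum_range_succ' _ n]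
    simp only [mulVec_mulVec, ← pow_succ', Nat.succ_sub_succ, pow_zero, one_mulVec,
      Nat.sub_zero]
    abel

lemma isUnit_two_smul_one_sub_smul {H : Matrix ι ι ℝ} {γ : ℝ}
    (hγ : ∀ v : ι → ℝ, γ * (v ⬝ᵥ H *ᵥ v) ≤ 1 / 2 * (v ⬝ᵥ v)) :
    IsUnit ((2 : ℝ) • (1 : Matrix ι ι ℝ) - γ • H) := by
  refine mulVec_injective_iff_isUnit.mp <|
    (injective_iff_map_eq_zero (mulVecLin ((2 : ℝ) • (1 : Matrix ι ι ℝ) - γ • H))).2 fun v hv ↦ ?_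
  have hv' : (2 : ℝ) • v = γ • H *ᵥ v := by
    simpa [sub_mulVec, smul_mulVec, sub_eq_zero] using hv
  have hvv : (2 : ℝ) * (v ⬝ᵥ v) = γ * (v ⬝ᵥ H *ᵥ v) := by
    simpa [dotProduct_smul] using congrArg (v ⬝ᵥ ·) hv'
  have hnonneg : 0 ≤ v ⬝ᵥ v := dotProduct_self_star_nonneg v
  exact dotProduct_self_eq_zero.mp (by linarith [hγ v])

lemma smul_sum_pow_two_mul_eq {R : Type*} [CommRing R] {H : Matrix ι ι R} (γ : R)
    (hH : IsUnit H.det) (hV : IsUnit ((2 : R) • (1 : Matrix ι ι R) - γ • H).det) (n : ℕ) :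
    γ • ∑ k ∈ Finset.range n, (1 - γ • H) ^ (2 * k) =
      (1 - (1 - γ • H) ^ (2 * n)) * H⁻¹ * ((2 : R) • (1 : Matrix ι ι R) - γ • H)⁻¹ := by
  set V := (2 : R) • (1 : Matrix ι ι R) - γ • H
  have hsq : 1 - (1 - γ • H) ^ 2 = γ • (V * H) := by
    simp only [V, sq, sub_mul, mul_sub, smul_mul_assoc, mul_smul_comm, smul_smul, one_mul,
      mul_one, smul_sub]
    module
  have hgeom : 1 - (1 - γ • H) ^ (2 * n) =
      (∑ k ∈ Finset.range n, (1 - γ • H) ^ (2 * k)) * (1 - (1 - γ • H) ^ 2) := by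
    simp only [pow_mul]
    rw [← neg_sub, ← geom_sum_mul, ← mul_neg, neg_sub]
  rw [hgeom, hsq, mul_smul_comm, ← Matrix.mul_assoc, smul_mul_assoc, smul_mul_assoc,
    mul_nonsing_inv_cancel_right (A := H) _ hH, mul_nonsing_inv_cancel_right (A := V) _ hV]

end Matrix

section RandomVectors

variable {ι Ω : Type*} [Fintype ι] [MeasurableSpace Ω] {μ : Measure Ω}

lemma MeasureTheory.MemLp.mulVec {κ : Type*} [Fintype κ] {p : ENNReal} {X : Ω → ι → ℝ}
    (hX : MemLp X p μ) (B : Matrix κ ι ℝ) : MemLp (fun ω ↦ B *ᵥ X ω) p μ :=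
  (mulVecLin B).toContinuousLinearMap.comp_memLp' hX

lemma integral_mulVec {κ : Type*} [Fintype κ] {X : Ω → ι → ℝ} (hX : Integrable X μ)
    (B : Matrix κ ι ℝ) : ∫ ω, B *ᵥ X ω ∂μ = B *ᵥ ∫ ω, X ω ∂μ :=
  (mulVecLin B).toContinuousLinearMap.integral_comp_comm hX

lemma ProbabilityTheory.IndepFun.mulVec {κ : Type*} [Fintype κ] {X Y : Ω → ι → ℝ}
    (hXY : IndepFun X Y μ) (B B' : Matrix κ ι ℝ) :
    IndepFun (fun ω ↦ B *ᵥ X ω) (fun ω ↦ B' *ᵥ Y ω) μ :=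
  hXY.comp (mulVecLin B).continuous_of_finiteDimensional.measurable
    (mulVecLin B').continuous_of_finiteDimensional.measurable

lemma integrable_dotProduct_mulVec {X Y : Ω → ι → ℝ} (hX : MemLp X 2 μ) (hY : MemLp Y 2 μ)
    (N : Matrix ι ι ℝ) : Integrable (fun ω ↦ X ω ⬝ᵥ N *ᵥ Y ω) μ := by
  simp only [dotProduct, mulVec, Finset.mul_sum]
  exact integrable_finsetSum _ fun a _ ↦ integrable_finsetSum _ fun b _ ↦
    (hX.eval a).integrable_mul ((hY.eval b).const_mul (N a b))

lemma integral_dotProduct_mulVec {X Y : Ω → ι → ℝ} (hX : MemLp X 2 μ) (hY : MemLp Y 2 μ)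
    (N : Matrix ι ι ℝ) :
    ∫ ω, X ω ⬝ᵥ N *ᵥ Y ω ∂μ = ∑ a, ∑ b, N a b * ∫ ω, X ω a * Y ω b ∂μ := by
  have hprod (a b : ι) : Integrable (fun ω ↦ N a b * (X ω a * Y ω b)) μ :=
    ((hX.eval a).integrable_mul (hY.eval b)).const_mul (N a b)
  have hpt (ω : Ω) : X ω ⬝ᵥ N *ᵥ Y ω = ∑ a, ∑ b, N a b * (X ω a * Y ω b) := by
    simp only [dotProduct, mulVec, Finset.mul_sum]
    exact Finset.sum_congr rfl fun a _ ↦ Finset.sum_congr rfl fun b _ ↦ by ring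
  simp_rw [hpt]
  rw [integral_finsetSum _ fun a _ ↦ integrable_finsetSum _ fun b _ ↦ hprod a b]
  refine Finset.sum_congr rfl fun a _ ↦ ?_
  rw [integral_finsetSum _ fun b _ ↦ hprod a b]
  simp only [integral_const_mul]

lemma integral_dotProduct_mulVec_self {X : Ω → ι → ℝ} (hX : MemLp X 2 μ) {C : Matrix ι ι ℝ}
    (hC : ∀ a b, ∫ ω, X ω a * X ω b ∂μ = C a b) (N : Matrix ι ι ℝ) :
    ∫ ω, X ω ⬝ᵥ N *ᵥ X ω ∂μ = trace (N * Cᵀ) := by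
  simp only [integral_dotProduct_mulVec hX hX, hC, trace, diag, mul_apply, transpose_apply]

lemma integral_dotProduct_mulVec_eq_zero {X Y : Ω → ι → ℝ} (hX : MemLp X 2 μ)
    (hY : MemLp Y 2 μ) (hXY : ∀ a b, ∫ ω, X ω a * Y ω b ∂μ = 0) (N : Matrix ι ι ℝ) :
    ∫ ω, X ω ⬝ᵥ N *ᵥ Y ω ∂μ = 0 := by
  simp [integral_dotProduct_mulVec hX hY, hXY]

lemma integral_eval_eq_zero {X : Ω → ι → ℝ} (hX : Integrable X μ) (h0 : ∫ ω, X ω ∂μ = 0)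
    (a : ι) : ∫ ω, X ω a ∂μ = 0 := by
  rw [← eval_integral hX.eval, h0, Pi.zero_apply]

lemma integral_const_dotProduct_mulVec_eq_zero [IsFiniteMeasure μ] {X : Ω → ι → ℝ}
    (hX : MemLp X 2 μ) (h0 : ∫ ω, X ω ∂μ = 0) (u : ι → ℝ) (N : Matrix ι ι ℝ) :
    ∫ ω, u ⬝ᵥ N *ᵥ X ω ∂μ = 0 :=
  integral_dotProduct_mulVec_eq_zero (memLp_const u) hX
    (fun a b ↦ by
      rw [integral_const_mul, integral_eval_eq_zero (hX.integrable one_le_two) h0, mul_zero]) N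

lemma integral_dotProduct_mulVec_const_eq_zero [IsFiniteMeasure μ] {X : Ω → ι → ℝ}
    (hX : MemLp X 2 μ) (h0 : ∫ ω, X ω ∂μ = 0) (u : ι → ℝ) (N : Matrix ι ι ℝ) :
    ∫ ω, X ω ⬝ᵥ N *ᵥ u ∂μ = 0 :=
  integral_dotProduct_mulVec_eq_zero hX (memLp_const u)
    (fun a b ↦ by
      rw [integral_mul_const, integral_eval_eq_zero (hX.integrable one_le_two) h0, zero_mul]) N

lemma ProbabilityTheory.IndepFun.integral_mul_eval_eq_zero {X Y : Ω → ι → ℝ}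
    (hXY : IndepFun X Y μ) (hX : Integrable X μ) (hY : AEStronglyMeasurable Y μ)
    (h0 : ∫ ω, X ω ∂μ = 0) (a b : ι) : ∫ ω, X ω a * Y ω b ∂μ = 0 := by
  have hab : IndepFun (fun ω ↦ X ω a) (fun ω ↦ Y ω b) μ :=
    hXY.comp (measurable_pi_apply a) (measurable_pi_apply b)
  rw [← Pi.mul_def, hab.integral_mul_eq_mul_integral (hX.eval a).aestronglyMeasurable
    ((continuous_apply b).comp_aestronglyMeasurable hY), integral_eval_eq_zero hX h0 a,
    zero_mul]

lemma integral_add_sum_dotProduct_mulVec_add_sum [IsProbabilityMeasure μ] {κ : Type*}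
    (s : Finset κ) {X : κ → Ω → ι → ℝ} (hX : ∀ j ∈ s, MemLp (X j) 2 μ)
    (h0 : ∀ j ∈ s, ∫ ω, X j ω ∂μ = 0)
    (hindep : (s : Set κ).Pairwise fun j l ↦ IndepFun (X j) (X l) μ) (u : ι → ℝ)
    (N : Matrix ι ι ℝ) :
    ∫ ω, (u + ∑ j ∈ s, X j ω) ⬝ᵥ N *ᵥ (u + ∑ j ∈ s, X j ω) ∂μ =
      u ⬝ᵥ N *ᵥ u + ∑ j ∈ s, ∫ ω, X j ω ⬝ᵥ N *ᵥ X j ω ∂μ := by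
  have hu : MemLp (fun _ ↦ u) 2 μ := memLp_const u
  have hquad (j) (hj : j ∈ s) (l) (hl : l ∈ s) :
      Integrable (fun ω ↦ X j ω ⬝ᵥ N *ᵥ X l ω) μ :=
    integrable_dotProduct_mulVec (hX j hj) (hX l hl) N
  have hlin (j) (hj : j ∈ s) :
      Integrable (fun ω ↦ u ⬝ᵥ N *ᵥ X j ω + X j ω ⬝ᵥ N *ᵥ u) μ :=
    (integrable_dotProduct_mulVec hu (hX j hj) N).add
      (integrable_dotProduct_mulVec (hX j hj) hu N)
  have hlin_sum : Integrable (fun ω ↦ ∑ j ∈ s, (u ⬝ᵥ N *ᵥ X j ω + X j ω ⬝ᵥ N *ᵥ u)) μ :=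
    integrable_finsetSum _ hlin
  have hquad_sum : Integrable (fun ω ↦ ∑ j ∈ s, ∑ l ∈ s, X j ω ⬝ᵥ N *ᵥ X l ω) μ :=
    integrable_finsetSum _ fun j hj ↦ integrable_finsetSum _ (hquad j hj)
  have hlin_zero : ∫ ω, ∑ j ∈ s, (u ⬝ᵥ N *ᵥ X j ω + X j ω ⬝ᵥ N *ᵥ u) ∂μ = 0 := by
    rw [integral_finsetSum _ hlin]
    refine Finset.sum_eq_zero fun j hj ↦ ?_
    rw [integral_add (integrable_dotProduct_mulVec hu (hX j hj) N)
      (integrable_dotProduct_mulVec (hX j hj) hu N),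
      integral_const_dotProduct_mulVec_eq_zero (hX j hj) (h0 j hj),
      integral_dotProduct_mulVec_const_eq_zero (hX j hj) (h0 j hj), add_zero]
  have hquad_diag : ∫ ω, ∑ j ∈ s, ∑ l ∈ s, X j ω ⬝ᵥ N *ᵥ X l ω ∂μ =
      ∑ j ∈ s, ∫ ω, X j ω ⬝ᵥ N *ᵥ X j ω ∂μ := by
    rw [integral_finsetSum _ fun j hj ↦ integrable_finsetSum _ (hquad j hj)]
    refine Finset.sum_congr rfl fun j hj ↦ ?_
    rw [integral_finsetSum _ (hquad j hj)]
    refine Finset.sum_eq_single_of_mem j hj fun l hl hlj ↦ ?_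
    exact integral_dotProduct_mulVec_eq_zero (hX j hj) (hX l hl)
      ((hindep hj hl hlj.symm).integral_mul_eval_eq_zero ((hX j hj).integrable one_le_two)
        (hX l hl).aestronglyMeasurable (h0 j hj)) N
  have hconst_lin : Integrable
      (fun ω ↦ u ⬝ᵥ N *ᵥ u + ∑ j ∈ s, (u ⬝ᵥ N *ᵥ X j ω + X j ω ⬝ᵥ N *ᵥ u)) μ :=
    (integrable_const _).add hlin_sum
  simp_rw [add_sum_dotProduct_mulVec_add_sum]
  rw [integral_add hconst_lin hquad_sum,
    integral_add (integrable_const _) hlin_sum, hlin_zero, hquad_diag, integral_const,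
    probReal_univ, one_smul, add_zero]

end RandomVectors

theorem stmt5_general {d : ℕ} {Ω : Type*} [MeasureSpace Ω]
    [IsProbabilityMeasure (volume : Measure Ω)]
    (H C : Matrix (Fin d) (Fin d) ℝ) (hH : H.PosDef)
    (γ : ℝ)
    -- `γ ≤ 1/(2L)` with `L = ‖H‖`, i.e. `γ H ≼ ½ I`
    (hγ : ∀ v : Fin d → ℝ, γ * (v ⬝ᵥ H.mulVec v) ≤ (1 / 2) * (v ⬝ᵥ v))
    (ξ : ℕ → Ω → (Fin d → ℝ)) (η : ℕ → Ω → (Fin d → ℝ)) (η0 : Fin d → ℝ)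
    (hmeas : ∀ i, Measurable (ξ i))
    -- i.i.d. noise
    (hindep : iIndepFun ξ volume)
    -- zero mean, covariance `C`, square integrable
    (hmean : ∀ i, ∫ ω, ξ i ω = 0)
    (hcov : ∀ i a b, ∫ ω, ξ i ω a * ξ i ω b = C a b)
    (hL2 : ∀ i, Integrable (fun ω => ‖ξ i ω‖ ^ 2))
    -- deterministic initialization and SGD recursion
    (hη0 : ∀ ω, η 0 ω = η0)
    (hrec : ∀ k ω, η (k + 1) ω = (1 - γ • H).mulVec (η k ω) + γ • ξ (k + 1) ω)
    (P : Polynomial ℝ) (n : ℕ) :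
    ∫ ω, (η n ω) ⬝ᵥ ((aeval H P).mulVec (η n ω)) =
      η0 ⬝ᵥ ((aeval H P * (1 - γ • H) ^ (2 * n)).mulVec η0) +
      γ * Matrix.trace
        (aeval H P * C * (1 - (1 - γ • H) ^ (2 * n)) * H⁻¹ *
          ((2 : ℝ) • (1 : Matrix (Fin d) (Fin d) ℝ) - γ • H)⁻¹) := by
  set M : Matrix (Fin d) (Fin d) ℝ := 1 - γ • H
  set A : Matrix (Fin d) (Fin d) ℝ := aeval H P
  have hMt : Mᵀ = M := by simp [M, (isHermitian_iff_isSymm.mp hH.isHermitian).eq]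
  have hAM : Commute A M := by
    have hAH : Commute A H := by simpa using (Commute.all P X).map (aeval H)
    exact (Commute.one_right A).sub_right (hAH.smul_right γ)
  have hCt : Cᵀ = C := by
    ext a b
    simp only [transpose_apply, ← hcov 0, mul_comm]
  have hξ (i : ℕ) : MemLp (ξ i) 2 :=
    (memLp_two_iff_integrable_sq_norm (hmeas i).aestronglyMeasurable).2 (hL2 i)
  have hunroll (ω : Ω) :
      η n ω = M ^ n *ᵥ η0 + ∑ k ∈ Finset.range n, (γ • M ^ k) *ᵥ ξ (n - k) ω := by
    rw [eq_pow_mulVec_add_sum_of_succ M (x := (η · ω)) (b := (γ • ξ · ω)) (hrec · ω), hη0]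
    simp only [mulVec_smul, smul_mulVec]
  simp_rw [hunroll]
  rw [integral_add_sum_dotProduct_mulVec_add_sum (Finset.range n) (fun k _ ↦ (hξ _).mulVec _)
    (fun k _ ↦ by rw [integral_mulVec ((hξ _).integrable one_le_two), hmean, mulVec_zero])
    (fun k hk l hl hkl ↦ (hindep.indepFun (by
      simp only [Finset.coe_range, Set.mem_Iio] at hk hl; omega)).mulVec _ _)]
  simp_rw [mulVec_dotProduct_mulVec_mulVec, transpose_pow_mul_mul_pow hMt hAM,
    integral_dotProduct_mulVec_self (hξ _) (hcov _), hCt,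
    trace_transpose_smul_pow_mul_mul_smul_pow_mul hMt hAM]
  have hV := (isUnit_iff_isUnit_det _).mp (isUnit_two_smul_one_sub_smul hγ)
  rw [Matrix.mul_assoc _ _ H⁻¹, Matrix.mul_assoc _ (_ * H⁻¹),
    ← smul_sum_pow_two_mul_eq γ hH.det_pos.ne'.isUnit hV, mul_smul_comm, trace_smul,
    smul_eq_mul, Finset.mul_sum, trace_sum, Finset.mul_sum, Finset.mul_sum]

/-- **Lemma (closed-form second moment for SGD on quadratics).**
For `f(θ) = ½θᵀHθ` with `H` symmetric positive definite, SGD with additive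
i.i.d. zero-mean noise of covariance `C` and step `γ ≤ 1/(2‖H‖)` satisfies, for
any polynomial `P`,
`E⟨η_n, P(H)η_n⟩ = η₀ᵀP(H)(I−γH)^{2n}η₀ + γ tr(P(H) C (I−(I−γH)^{2n}) H⁻¹ (2I−γH)⁻¹)`. -/
theorem stmt5 {d : ℕ} {Ω : Type*} [MeasureSpace Ω]
    [IsProbabilityMeasure (volume : Measure Ω)]
    (H C : Matrix (Fin d) (Fin d) ℝ) (hH : H.PosDef)
    (γ : ℝ) (hγpos : 0 < γ)
    -- `γ ≤ 1/(2L)` with `L = ‖H‖`, i.e. `γ H ≼ ½ I`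
    (hγ : ∀ v : Fin d → ℝ, γ * (v ⬝ᵥ H.mulVec v) ≤ (1 / 2) * (v ⬝ᵥ v))
    (ξ : ℕ → Ω → (Fin d → ℝ)) (η : ℕ → Ω → (Fin d → ℝ)) (η0 : Fin d → ℝ)
    (hmeas : ∀ i, Measurable (ξ i))
    -- i.i.d. noise
    (hindep : iIndepFun ξ volume)
    (hident : ∀ i j, Measure.map (ξ i) volume = Measure.map (ξ j) volume)
    -- zero mean, covariance `C`, square integrable
    (hmean : ∀ i, ∫ ω, ξ i ω = 0)
    (hcov : ∀ i a b, ∫ ω, ξ i ω a * ξ i ω b = C a b)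
    (hL2 : ∀ i, Integrable (fun ω => ‖ξ i ω‖ ^ 2))
    -- deterministic initialization and SGD recursion
    (hη0 : ∀ ω, η 0 ω = η0)
    (hrec : ∀ k ω, η (k + 1) ω = (1 - γ • H).mulVec (η k ω) + γ • ξ (k + 1) ω)
    (P : Polynomial ℝ) (n : ℕ) :
    ∫ ω, (η n ω) ⬝ᵥ ((aeval H P).mulVec (η n ω)) =
      η0 ⬝ᵥ ((aeval H P * (1 - γ • H) ^ (2 * n)).mulVec η0) +
      γ * Matrix.trace
        (aeval H P * C * (1 - (1 - γ • H) ^ (2 * n)) * H⁻¹ *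
          ((2 : ℝ) • (1 : Matrix (Fin d) (Fin d) ℝ) - γ • H)⁻¹) :=
  stmt5_general H C hH γ hγ ξ η η0 hmeas hindep hmean hcov hL2 hη0 hrec P n
end

section
/- Let c > 0, let χ be a real random variable satisfying P(χ ≥ x) = P(χ ≤ −x) for all x ≥ 0, and let R be any real random variable on the same probability space. Then ½ P(χ² ≥ c²) − P(R² ≥ c²) ≤ P(χ ≤ R) ≤ 1 − ½ P(χ² ≥ c²) + P(R² ≥ c²). -/
/-!
If `|R| < c`, then `χ ≤ -c` forces `χ ≤ R` and `χ ≥ c` forces `χ > R`; so, up to the event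
`R² ≥ c²`, the two tails of `χ` lie in `{χ ≤ R}` and in its complement respectively. By symmetry
each tail carries at least half of `P(χ² ≥ c²)`, which gives both bounds.
-/

open MeasureTheory

section

variable {Ω : Type*} [MeasurableSpace Ω] (μ : Measure Ω) [IsFiniteMeasure μ] (χ R : Ω → ℝ)
  {c : ℝ}

theorem measureReal_le_add_of_subset_union {s t u : Set Ω} (h : s ⊆ t ∪ u) :
    μ.real s ≤ μ.real t + μ.real u :=
  (measureReal_mono h).trans (measureReal_union_le t u)

theorem measureReal_sq_le_sq_le_add (hc : 0 ≤ c) :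
    μ.real {ω | c ^ 2 ≤ χ ω ^ 2} ≤ μ.real {ω | c ≤ χ ω} + μ.real {ω | χ ω ≤ -c} := by
  refine measureReal_le_add_of_subset_union μ fun ω hω ↦ ?_
  have : c ≤ |χ ω| := (abs_of_nonneg hc).symm.trans_le (sq_le_sq.mp hω)
  exact (le_abs'.mp this).symm

theorem measureReal_le_neg_le_add (hc : 0 ≤ c) :
    μ.real {ω | χ ω ≤ -c} ≤ μ.real {ω | χ ω ≤ R ω} + μ.real {ω | c ^ 2 ≤ R ω ^ 2} := by
  refine measureReal_le_add_of_subset_union μ fun ω (hω : χ ω ≤ -c) ↦ ?_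
  by_cases hR : c ^ 2 ≤ R ω ^ 2
  · exact Or.inr hR
  · exact Or.inl (hω.trans (abs_lt_of_sq_lt_sq' (not_le.mp hR) hc).1.le)

theorem measureReal_le_le_add (hc : 0 ≤ c) :
    μ.real {ω | c ≤ χ ω} ≤ μ.real {ω | R ω < χ ω} + μ.real {ω | c ^ 2 ≤ R ω ^ 2} := by
  refine measureReal_le_add_of_subset_union μ fun ω (hω : c ≤ χ ω) ↦ ?_
  by_cases hR : c ^ 2 ≤ R ω ^ 2
  · exact Or.inr hR
  · exact Or.inl ((abs_lt_of_sq_lt_sq' (not_le.mp hR) hc).2.trans_le hω)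

end

theorem stmt9_general {Ω : Type*} [MeasureSpace Ω]
    [IsProbabilityMeasure (volume : Measure Ω)]
    (χ R : Ω → ℝ) (hχ : Measurable χ) (hR : Measurable R)
    (c : ℝ)
    (hsym : ∀ x : ℝ, 0 ≤ x →
      volume {ω | x ≤ χ ω} = volume {ω | χ ω ≤ -x}) :
    (1 / 2) * (volume {ω | c ^ 2 ≤ (χ ω) ^ 2}).toReal -
        (volume {ω | c ^ 2 ≤ (R ω) ^ 2}).toReal ≤
      (volume {ω | χ ω ≤ R ω}).toReal ∧
    (volume {ω | χ ω ≤ R ω}).toReal ≤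
      1 - (1 / 2) * (volume {ω | c ^ 2 ≤ (χ ω) ^ 2}).toReal +
        (volume {ω | c ^ 2 ≤ (R ω) ^ 2}).toReal := by
  simp only [← measureReal_def, ← sq_abs c]
  have hc : 0 ≤ |c| := abs_nonneg c
  have htails : volume.real {ω | |c| ≤ χ ω} = volume.real {ω | χ ω ≤ -|c|} := by
    simp only [measureReal_def, hsym |c| hc]
  have hcompl : volume.real {ω | R ω < χ ω} = 1 - volume.real {ω | χ ω ≤ R ω} := by
    simpa only [Set.compl_ofPred, not_le] using probReal_compl_eq_one_sub (measurableSet_le hχ hR)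
  have := measureReal_sq_le_sq_le_add volume χ hc
  have := measureReal_le_neg_le_add volume χ R hc
  have := measureReal_le_le_add volume χ R hc
  constructor <;> linarith

/-- **Lemma (probability bounds via the symmetric noise component).**
If `χ` is symmetric (`P(χ ≥ x) = P(χ ≤ −x)` for all `x ≥ 0`) and `R` is any
real random variable on the same space, then for any `c > 0`,
`½P(χ² ≥ c²) − P(R² ≥ c²) ≤ P(χ ≤ R) ≤ 1 − ½P(χ² ≥ c²) + P(R² ≥ c²)`. -/
theorem stmt9 {Ω : Type*} [MeasureSpace Ω]
    [IsProbabilityMeasure (volume : Measure Ω)]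
    (χ R : Ω → ℝ) (hχ : Measurable χ) (hR : Measurable R)
    (c : ℝ) (hc : 0 < c)
    (hsym : ∀ x : ℝ, 0 ≤ x →
      volume {ω | x ≤ χ ω} = volume {ω | χ ω ≤ -x}) :
    (1 / 2) * (volume {ω | c ^ 2 ≤ (χ ω) ^ 2}).toReal -
        (volume {ω | c ^ 2 ≤ (R ω) ^ 2}).toReal ≤
      (volume {ω | χ ω ≤ R ω}).toReal ∧
    (volume {ω | χ ω ≤ R ω}).toReal ≤
      1 - (1 / 2) * (volume {ω | c ^ 2 ≤ (χ ω) ^ 2}).toReal +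
        (volume {ω | c ^ 2 ≤ (R ω) ^ 2}).toReal :=
  stmt9_general χ R hχ hR c hsym
end
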